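/- D-bracket-derivative property of twisted products: for mutually local twisted vertex operators a(z) ∈ A^k and b(z) ∈ A in a local system A on M, (∂/∂z₀) Y_A(a(z), z₀) b(z) = Y_A(a'(z), z₀) b(z), i.e., for every integer n, a'(z)ₙ b(z) = -n · a(z)_{n-1} b(z). -/
import Mathlib


/-- The generalized binomial coefficient `C(x, k) = x(x-1)⋯(x-k+1)/k!` for `x ∈ ℂ`. -/
noncomputable def cchoose (x : ℂ) (k : ℕ) : ℂ :=
  (∏ i ∈ Finset.range k, (x - i)) / (Nat.factorial k : ℂ)

/-- The `n`-th twisted product `a(z)ₙ b(z)` of `ℤ_T`-twisted vertex operators,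
for `a(z) ∈ F(M,T)^j`, written coefficientwise.  `A q` (resp. `B q`) is the
coefficient of `z^q` in `a(z)` (resp. `b(z)`), and the coefficient of `z^q` in
`a(z)ₙ b(z) = Res_{z₁}Res_{z₀} ((z₁-z₀)/z)^{j/T} z₀ⁿ
  [z₀⁻¹δ((z₁-z)/z₀) a(z₁)b(z) - ε z₀⁻¹δ((z-z₁)/(-z₀)) b(z)a(z₁)]`
is obtained by expanding `((z₁-z₀)/z)^{j/T} = ∑_i C(j/T,i)(-1)^i z₁^{j/T-i}z₀^i z^{-j/T}`
and the delta functions, and extracting residues. -/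
noncomputable def twProd (M : Type*) [AddCommGroup M] [Module ℂ M]
    (T : ℕ) (j : ℤ) (A B : ℚ → Module.End ℂ M) (ε : ℂ) (n : ℤ) :
    ℚ → Module.End ℂ M :=
  fun q =>
    ∑ᶠ i : ℕ,
      (cchoose ((j : ℂ) / (T : ℂ)) i * (-1 : ℂ) ^ i) •
        ((∑ᶠ k : ℕ, (cchoose ((n : ℂ) + (i : ℂ)) k * (-1 : ℂ) ^ k) •
            (A ((k : ℚ) - (n : ℚ) - 1 - (j : ℚ) / (T : ℚ)) *
              B (q - (k : ℚ) + (j : ℚ) / (T : ℚ))))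
          - ε • (∑ᶠ k : ℕ,
              (cchoose ((n : ℂ) + (i : ℂ)) k * (-1 : ℂ) ^ ((n : ℤ) + (i : ℤ) - (k : ℤ))) •
            (B (q - (n : ℚ) - (i : ℚ) + (k : ℚ) + (j : ℚ) / (T : ℚ)) *
              A ((i : ℚ) - (k : ℚ) - 1 - (j : ℚ) / (T : ℚ)))))


section st15aux
set_option linter.unusedSectionVars false

lemma st15_fac_ne (k : ℕ) : ((Nat.factorial k : ℕ) : ℂ) ≠ 0 :=
  Nat.cast_ne_zero.mpr (Nat.factorial_ne_zero _)

lemma st15_succ_ne (k : ℕ) : ((k:ℂ) + 1) ≠ 0 := by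
  have : ((k+1:ℕ):ℂ) ≠ 0 := Nat.cast_ne_zero.mpr (Nat.succ_ne_zero k)
  push_cast at this; exact this

lemma st15_fac_succ (k : ℕ) : (((k+1).factorial : ℕ) : ℂ) = ((k:ℂ)+1) * (k.factorial : ℂ) := by
  push_cast [Nat.factorial_succ]; ring

lemma st15_cchoose_zero (x : ℂ) : cchoose x 0 = 1 := by
  simp [cchoose]

lemma st15_cchoose_natCast (m k : ℕ) : cchoose (m : ℂ) k = (m.choose k : ℂ) := by
  induction k with
  | zero => simp [cchoose]
  | succ k ih =>
    rcases le_or_gt (k+1) m with h | h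
    · have hk : k ≤ m := Nat.le_of_succ_le h
      have hprod : (∏ i ∈ Finset.range k, ((m : ℂ) - i)) = (m.choose k : ℂ) * (k.factorial : ℂ) := by
        have := ih
        rw [cchoose, div_eq_iff (st15_fac_ne k)] at this
        exact this
      have hch : (m.choose (k+1) : ℂ) * ((k:ℂ)+1) = (m.choose k : ℂ) * ((m : ℂ) - k) := by
        have h2 := congrArg (fun t : ℕ => (t : ℂ)) (Nat.choose_succ_right_eq m k)
        simp only [Nat.cast_mul] at h2
        rw [Nat.cast_sub hk] at h2
        push_cast at h2 ⊢
        linear_combination h2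
      rw [cchoose, Finset.prod_range_succ, hprod, div_eq_iff (st15_fac_ne (k+1)), st15_fac_succ]
      linear_combination (-(k.factorial : ℂ)) * hch
    · have h0 : (∏ i ∈ Finset.range (k+1), ((m : ℂ) - i)) = 0 :=
        Finset.prod_eq_zero (Finset.mem_range.mpr h) (by simp)
      simp [cchoose, h0, Nat.choose_eq_zero_of_lt h]

lemma st15_cchoose_absorb (x : ℂ) (k : ℕ) : (x - k) * cchoose x k = x * cchoose (x - 1) k := by
  have h1 : (∏ i ∈ Finset.range (k+1), (x - i)) = (∏ i ∈ Finset.range k, (x - i)) * (x - k) := by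
    rw [Finset.prod_range_succ]
  have h2 : (∏ i ∈ Finset.range (k+1), (x - i)) = (∏ i ∈ Finset.range k, ((x - 1) - i)) * x := by
    rw [Finset.prod_range_succ']
    congr 1
    · exact Finset.prod_congr rfl fun i _ => by push_cast; ring
    · simp
  rw [cchoose, cchoose, ← mul_div_assoc, ← mul_div_assoc, mul_comm (x - (k:ℂ)), ← h1, h2]
  ring

lemma st15_cchoose_succ (x : ℂ) (k : ℕ) :
    ((k:ℂ) + 1) * cchoose x (k+1) = (x - k) * cchoose x k := by
  rw [cchoose, cchoose, Finset.prod_range_succ, st15_fac_succ, ← mul_div_assoc,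
    ← mul_div_assoc, div_eq_div_iff (mul_ne_zero (st15_succ_ne k) (st15_fac_ne k)) (st15_fac_ne k)]
  ring

lemma st15_cchoose_succ' (x : ℂ) (k : ℕ) :
    ((k:ℂ) + 1) * cchoose x (k+1) = x * cchoose (x - 1) k := by
  rw [st15_cchoose_succ, st15_cchoose_absorb]

lemma st15_cchoose_ne_zero (y : ℤ) (hy : y < 0) (k : ℕ) : cchoose (y:ℂ) k ≠ 0 := by
  rw [cchoose]
  apply div_ne_zero _ (st15_fac_ne k)
  apply Finset.prod_ne_zero_iff.mpr
  intro i _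
  have h : ((y:ℂ) - i) = ((y - i : ℤ) : ℂ) := by push_cast; ring
  rw [h]
  exact_mod_cast Int.ne_of_lt (by omega)



section helpers
variable {E : Type*} [AddCommGroup E] [Module ℂ E] [NoZeroSMulDivisors ℂ E]

lemma st15_finsum_tail_zero (u : ℕ → ℂ) (V : ℕ → E)
    (hV : (Function.support V).Infinite) (K : ℕ) (hu : ∀ k, K ≤ k → u k ≠ 0) :
    ∑ᶠ k, u k • V k = 0 := by
  apply finsum_of_infinite_support
  apply Set.Infinite.mono (s := Function.support V \ Set.Iio K)
  · intro k hk
    rcases hk with ⟨hk1, hk2⟩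
    simp only [Set.mem_Iio, not_lt] at hk2
    exact smul_ne_zero (hu k hk2) hk1
  · exact hV.diff (Set.finite_Iio K)

lemma st15_finsum_shift (g : ℕ → E) (h0 : g 0 = 0) :
    ∑ᶠ k, g (k+1) = ∑ᶠ k, g k := by
  by_cases hfin : (Function.support g).Finite
  · obtain ⟨N, hN⟩ := hfin.bddAbove
    have hsub : Function.support g ⊆ ↑(Finset.range (N+1)) := by
      intro k hk
      simp only [Finset.coe_range, Set.mem_Iio]
      exact Nat.lt_succ_of_le (hN hk)
    have hsub2 : Function.support (fun k => g (k+1)) ⊆ ↑(Finset.range N) := by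
      intro k hk
      simp only [Finset.coe_range, Set.mem_Iio]
      have := hN (hk : g (k+1) ≠ 0)
      omega
    rw [finsum_eq_sum_of_support_subset _ hsub, finsum_eq_sum_of_support_subset _ hsub2,
      Finset.sum_range_succ' g N, h0, add_zero]
  · have hinf2 : (Function.support (fun k => g (k+1))).Infinite := by
      intro hfin2
      apply hfin
      have hss : Function.support g ⊆ insert 0 ((· + 1) '' Function.support (fun k => g (k+1))) := by
        intro a ha
        cases a with
        | zero => exact Set.mem_insert _ _
        | succ b => exact Set.mem_insert_of_mem _ ⟨b, ha, rfl⟩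
      exact Set.Finite.subset ((hfin2.image _).insert 0) hss
    rw [finsum_of_infinite_support hinf2, finsum_of_infinite_support hfin]

lemma st15_split_tail (u v w : ℕ → ℂ) (V : ℕ → E) (h : ∀ k, u k = v k + w k)
    (hv : (Function.support fun k => v k • V k).Finite)
    (hw : (Function.support fun k => w k • V k).Finite) :
    ∑ᶠ k, u k • V k = (∑ᶠ k, v k • V k) + ∑ᶠ k, w k • V k := by
  rw [← finsum_add_distrib hv hw]
  exact finsum_congr fun k => by rw [h k, add_smul]

end helpers

section vand
variable {E : Type*} [AddCommGroup E] [Module ℂ E]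

lemma st15_PS (c : ℕ) (Ψ : ℕ → E) :
    ∑ k ∈ Finset.range (c+2), (((c+1).choose k : ℂ) * (-1)^k) • Ψ k
      = (∑ k ∈ Finset.range (c+1), ((c.choose k : ℂ) * (-1)^k) • Ψ k)
        - ∑ k ∈ Finset.range (c+1), ((c.choose k : ℂ) * (-1)^k) • Ψ (k+1) := by
  have e1 : ∑ k ∈ Finset.range (c+2), (((c+1).choose k : ℂ) * (-1)^k) • Ψ k
      = (∑ k ∈ Finset.range (c+1), (((c+1).choose (k+1) : ℂ) * (-1)^(k+1)) • Ψ (k+1))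
        + (((c+1).choose 0 : ℂ) * (-1)^0) • Ψ 0 :=
    Finset.sum_range_succ' (fun k => (((c+1).choose k : ℂ) * (-1)^k) • Ψ k) (c+1)
  have e2 : ∀ k : ℕ, (((c+1).choose (k+1) : ℂ) * (-1)^(k+1)) • Ψ (k+1)
      = -(((c.choose k : ℂ) * (-1)^k) • Ψ (k+1))
        + ((c.choose (k+1) : ℂ) * (-1)^(k+1)) • Ψ (k+1) := by
    intro k
    rw [← neg_smul, ← add_smul, Nat.choose_succ_succ]
    congr 1
    push_cast
    ring
  have e3 : ∑ k ∈ Finset.range (c+1), (((c+1).choose (k+1) : ℂ) * (-1)^(k+1)) • Ψ (k+1)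
      = -(∑ k ∈ Finset.range (c+1), ((c.choose k : ℂ) * (-1)^k) • Ψ (k+1))
        + ∑ k ∈ Finset.range (c+1), ((c.choose (k+1) : ℂ) * (-1)^(k+1)) • Ψ (k+1) := by
    rw [Finset.sum_congr rfl (fun k _ => e2 k), Finset.sum_add_distrib, Finset.sum_neg_distrib]
  have e4 : ∑ k ∈ Finset.range (c+2), ((c.choose k : ℂ) * (-1)^k) • Ψ k
      = (∑ k ∈ Finset.range (c+1), ((c.choose (k+1) : ℂ) * (-1)^(k+1)) • Ψ (k+1))
        + ((c.choose 0 : ℂ) * (-1)^0) • Ψ 0 :=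
    Finset.sum_range_succ' (fun k => ((c.choose k : ℂ) * (-1)^k) • Ψ k) (c+1)
  have e5 : ∑ k ∈ Finset.range (c+2), ((c.choose k : ℂ) * (-1)^k) • Ψ k
      = ∑ k ∈ Finset.range (c+1), ((c.choose k : ℂ) * (-1)^k) • Ψ k := by
    rw [Finset.sum_range_succ, Nat.choose_eq_zero_of_lt (Nat.lt_succ_self c)]
    simp
  have e6 : (((c+1).choose 0 : ℂ) * (-1)^0) • Ψ 0 = (((c).choose 0 : ℂ) * (-1)^0) • Ψ 0 := by
    simp
  have e7 : ∑ k ∈ Finset.range (c+1), ((c.choose (k+1) : ℂ) * (-1)^(k+1)) • Ψ (k+1)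
      = (∑ k ∈ Finset.range (c+1), ((c.choose k : ℂ) * (-1)^k) • Ψ k)
        - ((c.choose 0 : ℂ) * (-1)^0) • Ψ 0 := by
    rw [← e5, e4]; abel
  rw [e1, e3, e6, e7]
  abel

lemma st15_VAND (a b : ℕ) (Φ : ℕ → E) :
    ∑ k ∈ Finset.range (a+b+1), (((a+b).choose k : ℂ) * (-1)^k) • Φ k
      = ∑ t ∈ Finset.range (a+1), ((a.choose t : ℂ) * (-1)^t) •
          ∑ s ∈ Finset.range (b+1), ((b.choose s : ℂ) * (-1)^s) • Φ (t+s) := by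
  induction a generalizing Φ with
  | zero =>
    simp
  | succ a ih =>
    have hL : ∑ k ∈ Finset.range ((a+1)+b+1), ((((a+1)+b).choose k : ℂ) * (-1)^k) • Φ k
        = (∑ k ∈ Finset.range (a+b+1), (((a+b).choose k : ℂ) * (-1)^k) • Φ k)
          - ∑ k ∈ Finset.range (a+b+1), (((a+b).choose k : ℂ) * (-1)^k) • Φ (k+1) := by
      have : (a+1)+b+1 = (a+b)+2 := by ring
      rw [this]
      have : (a+1)+b = (a+b)+1 := by ring
      rw [this]
      exact st15_PS (a+b) Φ
    rw [hL, ih Φ, ih (fun k => Φ (k+1))]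
    have hR : ∑ t ∈ Finset.range (a+2), (((a+1).choose t : ℂ) * (-1)^t) •
          (∑ s ∈ Finset.range (b+1), ((b.choose s : ℂ) * (-1)^s) • Φ (t+s))
        = (∑ t ∈ Finset.range (a+1), ((a.choose t : ℂ) * (-1)^t) •
            ∑ s ∈ Finset.range (b+1), ((b.choose s : ℂ) * (-1)^s) • Φ (t+s))
          - ∑ t ∈ Finset.range (a+1), ((a.choose t : ℂ) * (-1)^t) •
            ∑ s ∈ Finset.range (b+1), ((b.choose s : ℂ) * (-1)^s) • Φ ((t+1)+s) :=
      st15_PS a (fun t => ∑ s ∈ Finset.range (b+1), ((b.choose s : ℂ) * (-1)^s) • Φ (t+s))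
    rw [hR]
    congr 1
    refine Finset.sum_congr rfl fun t _ => ?_
    congr 1
    refine Finset.sum_congr rfl fun s _ => ?_
    rw [show t + s + 1 = t + 1 + s from by ring]
end vand

section key
variable {E : Type*} [AddCommGroup E] [Module ℂ E]

lemma st15_neg_one_zpow_ne (z : ℤ) : ((-1:ℂ)) ^ z ≠ 0 := zpow_ne_zero z (by norm_num)

lemma st15_neg_one_pow_ne (n : ℕ) : ((-1:ℂ)) ^ n ≠ 0 := pow_ne_zero n (by norm_num)

lemma st15_cast_sub_one (y : ℤ) : ((y:ℂ) - 1) = ((y - 1 : ℤ) : ℂ) := by push_cast; ring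

lemma st15_cchoose_sub_one_ne (y : ℤ) (hy : y < 0) (k : ℕ) : cchoose ((y:ℂ)-1) k ≠ 0 := by
  rw [st15_cast_sub_one]; exact st15_cchoose_ne_zero _ (by omega) k

lemma st15_cchoose_nat_zero (y : ℤ) (hy : 0 ≤ y) (k : ℕ) (hk : y.toNat < k) :
    cchoose (y:ℂ) k = 0 := by
  have h : ((y.toNat : ℕ) : ℂ) = (y:ℂ) := by exact_mod_cast congrArg Int.cast (Int.toNat_of_nonneg hy)
  rw [← h, st15_cchoose_natCast]
  simp [Nat.choose_eq_zero_of_lt hk]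

lemma st15_tail_ne (c : ℂ) : ∃ K : ℕ, ∀ k, K ≤ k → ((k:ℂ) - c) ≠ 0 := by
  by_cases h : ∃ k₀ : ℕ, ((k₀:ℂ) - c) = 0
  · obtain ⟨k₀, h0⟩ := h
    refine ⟨k₀+1, fun k hk hcon => ?_⟩
    have hc : (k:ℂ) = (k₀:ℂ) := by linear_combination hcon - h0
    have : k = k₀ := Nat.cast_inj.mp hc
    omega
  · push_neg at h
    exact ⟨0, fun k _ => h k⟩

lemma st15_supp_coef {E : Type*} [AddCommGroup E] [Module ℂ E]
    (v : ℕ → ℂ) (P : ℕ → E) (K : ℕ) (h : ∀ k, K ≤ k → v k = 0) :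
    (Function.support fun k => v k • P k).Finite := by
  apply Set.Finite.subset (Set.finite_Iio K)
  intro k hk
  simp only [Function.mem_support] at hk
  by_contra hK
  simp only [Set.mem_Iio, not_lt] at hK
  exact hk (by rw [h k hK, zero_smul])

lemma st15_supp_op {E : Type*} [AddCommGroup E] [Module ℂ E]
    (v : ℕ → ℂ) (P : ℕ → E) (h : (Function.support P).Finite) :
    (Function.support fun k => v k • P k).Finite := by
  apply h.subset
  intro k hk
  simp only [Function.mem_support] at hk ⊢
  intro h0
  exact hk (by rw [h0, smul_zero])

variable [NoZeroSMulDivisors ℂ E]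

lemma st15_keyA (P : ℕ → E) (y : ℤ) (i : ℕ) (x γ δ : ℂ)
    (hδ : ((i:ℂ)+1) * δ = ((i:ℂ) - x) * γ) :
    ∑ᶠ k : ℕ, (γ * (cchoose (y:ℂ) k * (-1:ℂ)^k) * ((k:ℂ) - ((y:ℂ) - (i:ℂ)) - x)) • P k
      = (-(y:ℂ)) • (∑ᶠ k : ℕ, (γ * (cchoose ((y:ℂ)-1) k * (-1:ℂ)^k)) • P k)
        + ((i:ℂ)+1) • ∑ᶠ k : ℕ, (δ * (cchoose ((y:ℂ)) k * (-1:ℂ)^k)) • P k := by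
  set u : ℕ → ℂ := fun k => γ * (cchoose (y:ℂ) k * (-1:ℂ)^k) * ((k:ℂ) - ((y:ℂ) - (i:ℂ)) - x) with hu
  set v : ℕ → ℂ := fun k => (-(y:ℂ)) * (γ * (cchoose ((y:ℂ)-1) k * (-1:ℂ)^k)) with hv
  set w : ℕ → ℂ := fun k => ((i:ℂ)+1) * (δ * (cchoose ((y:ℂ)) k * (-1:ℂ)^k)) with hw
  have hpt : ∀ k, u k = v k + w k := by
    intro k
    have h1 : ((k:ℂ) - (y:ℂ)) * cchoose (y:ℂ) k = (-(y:ℂ)) * cchoose ((y:ℂ)-1) k := by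
      linear_combination -(st15_cchoose_absorb (y:ℂ) k)
    simp only [hu, hv, hw]
    linear_combination (γ * (-1:ℂ)^k) * h1 - (cchoose (y:ℂ) k * (-1:ℂ)^k) * hδ
  have hev : (-(y:ℂ)) • (∑ᶠ k : ℕ, (γ * (cchoose ((y:ℂ)-1) k * (-1:ℂ)^k)) • P k)
      = ∑ᶠ k, v k • P k := by
    rw [smul_finsum]
    exact finsum_congr fun k => by rw [smul_smul, hv]
  have hew : ((i:ℂ)+1) • (∑ᶠ k : ℕ, (δ * (cchoose ((y:ℂ)) k * (-1:ℂ)^k)) • P k)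
      = ∑ᶠ k, w k • P k := by
    rw [smul_finsum]
    exact finsum_congr fun k => by rw [smul_smul, hw]
  have hL0 : (∑ᶠ k : ℕ, (γ * (cchoose (y:ℂ) k * (-1:ℂ)^k) * ((k:ℂ) - ((y:ℂ) - (i:ℂ)) - x)) • P k)
      = ∑ᶠ k, u k • P k := rfl
  rw [hL0, hev, hew]
  by_cases hδ0 : δ = 0
  · have hw0 : ∀ k, w k = 0 := fun k => by simp [hw, hδ0]
    have hzw : ∑ᶠ k, w k • P k = 0 := by
      apply finsum_eq_zero_of_forall_eq_zero
      intro k; rw [hw0 k, zero_smul]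
    rw [hzw, add_zero]
    exact finsum_congr fun k => by rw [hpt k, add_smul, hw0 k, zero_smul, add_zero]
  · have hγ0 : γ ≠ 0 := by
      intro h
      rw [h, mul_zero] at hδ
      exact hδ0 ((mul_eq_zero.mp hδ).resolve_left (st15_succ_ne i))
    by_cases hy : 0 ≤ y
    · apply st15_split_tail u v w P hpt
      · apply st15_supp_coef v P (y.toNat + 1)
        intro k hk
        rcases eq_or_lt_of_le hy with h0 | hpos
        · simp [hv, ← h0]
        · have h1 : cchoose ((y:ℂ)-1) k = 0 := by
            rw [st15_cast_sub_one]
            exact st15_cchoose_nat_zero (y-1) (by omega) k (by omega)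
          simp [hv, h1]
      · apply st15_supp_coef w P (y.toNat + 1)
        intro k hk
        simp [hw, st15_cchoose_nat_zero y hy k (by omega)]
    · push_neg at hy
      by_cases hP : (Function.support P).Finite
      · exact st15_split_tail u v w P hpt (st15_supp_op v P hP) (st15_supp_op w P hP)
      · have hyC : (y:ℂ) ≠ 0 := Int.cast_ne_zero.mpr (by omega)
        obtain ⟨K, hK⟩ := st15_tail_ne ((y:ℂ) - (i:ℂ) + x)
        have hzu : ∑ᶠ k, u k • P k = 0 := by
          apply st15_finsum_tail_zero u P hP K
          intro k hk
          simp only [hu]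
          refine mul_ne_zero (mul_ne_zero hγ0 (mul_ne_zero (st15_cchoose_ne_zero y hy k)
            (st15_neg_one_pow_ne k))) ?_
          have := hK k hk
          intro hc; apply this; linear_combination hc
        have hzv : ∑ᶠ k, v k • P k = 0 := by
          apply st15_finsum_tail_zero v P hP 0
          intro k _
          exact mul_ne_zero (neg_ne_zero.mpr hyC) (mul_ne_zero hγ0
            (mul_ne_zero (st15_cchoose_sub_one_ne y hy k) (st15_neg_one_pow_ne k)))
        have hzw : ∑ᶠ k, w k • P k = 0 := by
          apply st15_finsum_tail_zero w P hP 0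
          intro k _
          exact mul_ne_zero (st15_succ_ne i) (mul_ne_zero hδ0
            (mul_ne_zero (st15_cchoose_ne_zero y hy k) (st15_neg_one_pow_ne k)))
        rw [hzu, hzv, hzw, add_zero]

lemma st15_keyB (V : ℕ → E) (y : ℤ) (i : ℕ) (x γ δ : ℂ)
    (hδ : ((i:ℂ)+1) * δ = ((i:ℂ) - x) * γ) :
    ∑ᶠ k : ℕ, (γ * (cchoose (y:ℂ) k * (-1:ℂ)^((y:ℤ) - (k:ℤ))) * ((i:ℂ) - (k:ℂ) - x)) • V k
      = (-(y:ℂ)) • (∑ᶠ k : ℕ, (γ * (cchoose ((y:ℂ)-1) k * (-1:ℂ)^((y:ℤ) - 1 - (k:ℤ)))) • V (k+1))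
        + ((i:ℂ)+1) • ∑ᶠ k : ℕ, (δ * (cchoose ((y:ℂ)) k * (-1:ℂ)^((y:ℤ) - (k:ℤ)))) • V k := by
  set u : ℕ → ℂ := fun k => γ * (cchoose (y:ℂ) k * (-1:ℂ)^((y:ℤ) - (k:ℤ))) * ((i:ℂ) - (k:ℂ) - x) with hu
  set v : ℕ → ℂ := fun k =>
    if k = 0 then 0 else
      (-(y:ℂ)) * (γ * (cchoose ((y:ℂ)-1) (k-1) * (-1:ℂ)^((y:ℤ) - 1 - ((k-1 : ℕ):ℤ)))) with hv
  set w : ℕ → ℂ := fun k => ((i:ℂ)+1) * (δ * (cchoose ((y:ℂ)) k * (-1:ℂ)^((y:ℤ) - (k:ℤ)))) with hw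
  have hv0 : v 0 = 0 := by simp [hv]
  have hvs : ∀ k : ℕ, v (k+1) = (-(y:ℂ)) * (γ * (cchoose ((y:ℂ)-1) k * (-1:ℂ)^((y:ℤ) - 1 - (k:ℤ)))) := by
    intro k; simp [hv]
  have hpt : ∀ k, u k = v k + w k := by
    intro k
    cases k with
    | zero =>
      simp only [hu, hv0, hw, Nat.cast_zero, zero_add, st15_cchoose_zero, sub_zero]
      push_cast
      linear_combination (-((-1:ℂ)^(y:ℤ))) * hδ
    | succ k =>
      simp only [hu, hw]
      rw [hvs k]
      have hs := st15_cchoose_succ' (y:ℂ) k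
      have hexp : (-1:ℂ)^((y:ℤ) - 1 - (k:ℤ)) = (-1:ℂ)^((y:ℤ) - ((k+1:ℕ):ℤ)) := by
        congr 1; push_cast; ring
      rw [hexp]
      push_cast
      linear_combination (-((-1:ℂ)^((y:ℤ) - ((k:ℤ)+1)) * cchoose (y:ℂ) (k+1))) * hδ
        - ((-1:ℂ)^((y:ℤ) - ((k:ℤ)+1)) * γ) * hs
  have hev : (-(y:ℂ)) • (∑ᶠ k : ℕ, (γ * (cchoose ((y:ℂ)-1) k * (-1:ℂ)^((y:ℤ) - 1 - (k:ℤ)))) • V (k+1))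
      = ∑ᶠ k, v k • V k := by
    rw [smul_finsum]
    have h1 : ∀ k : ℕ, (-(y:ℂ)) • ((γ * (cchoose ((y:ℂ)-1) k * (-1:ℂ)^((y:ℤ) - 1 - (k:ℤ)))) • V (k+1))
        = v (k+1) • V (k+1) := fun k => by rw [smul_smul, hvs k]
    rw [finsum_congr h1]
    exact st15_finsum_shift (fun k => v k • V k) (by show v 0 • V 0 = 0; rw [hv0, zero_smul])
  have hew : ((i:ℂ)+1) • (∑ᶠ k : ℕ, (δ * (cchoose ((y:ℂ)) k * (-1:ℂ)^((y:ℤ) - (k:ℤ)))) • V k)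
      = ∑ᶠ k, w k • V k := by
    rw [smul_finsum]
    exact finsum_congr fun k => by rw [smul_smul, hw]
  have hL0 : (∑ᶠ k : ℕ, (γ * (cchoose (y:ℂ) k * (-1:ℂ)^((y:ℤ) - (k:ℤ))) * ((i:ℂ) - (k:ℂ) - x)) • V k)
      = ∑ᶠ k, u k • V k := rfl
  rw [hL0, hev, hew]
  by_cases hδ0 : δ = 0
  · have hw0 : ∀ k, w k = 0 := fun k => by simp [hw, hδ0]
    have hzw : ∑ᶠ k, w k • V k = 0 := by
      apply finsum_eq_zero_of_forall_eq_zero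
      intro k; rw [hw0 k, zero_smul]
    rw [hzw, add_zero]
    exact finsum_congr fun k => by rw [hpt k, add_smul, hw0 k, zero_smul, add_zero]
  · have hγ0 : γ ≠ 0 := by
      intro h
      rw [h, mul_zero] at hδ
      exact hδ0 ((mul_eq_zero.mp hδ).resolve_left (st15_succ_ne i))
    by_cases hy : 0 ≤ y
    · apply st15_split_tail u v w V hpt
      · apply st15_supp_coef v V (y.toNat + 2)
        intro k hk
        have hk0 : k ≠ 0 := by omega
        obtain ⟨k', rfl⟩ := Nat.exists_eq_succ_of_ne_zero hk0
        rw [hvs k']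
        rcases eq_or_lt_of_le hy with h0 | hpos
        · simp [← h0]
        · have h1 : cchoose ((y:ℂ)-1) k' = 0 := by
            rw [st15_cast_sub_one]
            exact st15_cchoose_nat_zero (y-1) (by omega) k' (by omega)
          simp [h1]
      · apply st15_supp_coef w V (y.toNat + 2)
        intro k hk
        simp [hw, st15_cchoose_nat_zero y hy k (by omega)]
    · push_neg at hy
      by_cases hV : (Function.support V).Finite
      · exact st15_split_tail u v w V hpt (st15_supp_op v V hV) (st15_supp_op w V hV)
      · have hyC : (y:ℂ) ≠ 0 := Int.cast_ne_zero.mpr (by omega)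
        obtain ⟨K, hK⟩ := st15_tail_ne ((i:ℂ) - x)
        have hzu : ∑ᶠ k, u k • V k = 0 := by
          apply st15_finsum_tail_zero u V hV K
          intro k hk
          simp only [hu]
          refine mul_ne_zero (mul_ne_zero hγ0 (mul_ne_zero (st15_cchoose_ne_zero y hy k)
            (st15_neg_one_zpow_ne _))) ?_
          have := hK k hk
          intro hc; apply this; linear_combination -hc
        have hzv : ∑ᶠ k, v k • V k = 0 := by
          apply st15_finsum_tail_zero v V hV 1
          intro k hk
          obtain ⟨k', rfl⟩ := Nat.exists_eq_succ_of_ne_zero (by omega : k ≠ 0)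
          rw [hvs k']
          exact mul_ne_zero (neg_ne_zero.mpr hyC) (mul_ne_zero hγ0
            (mul_ne_zero (st15_cchoose_sub_one_ne y hy k') (st15_neg_one_zpow_ne _)))
        have hzw : ∑ᶠ k, w k • V k = 0 := by
          apply st15_finsum_tail_zero w V hV 0
          intro k _
          exact mul_ne_zero (st15_succ_ne i) (mul_ne_zero hδ0
            (mul_ne_zero (st15_cchoose_ne_zero y hy k) (st15_neg_one_zpow_ne _)))
        rw [hzu, hzv, hzw, add_zero]
end key

lemma st15_C1 {M : Type*} [AddCommGroup M] [Module ℂ M]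
    (T : ℕ) (j : ℤ) (A B : ℚ → Module.End ℂ M) (ε : ℂ) (r : ℕ)
    (hloc : ∀ p q : ℚ,
      ∑ s ∈ Finset.range (r + 1),
          ((-1 : ℂ) ^ s * (Nat.choose r s : ℂ)) • (A (p - ((r : ℚ) - s)) * B (q - s))
        = ε • ∑ s ∈ Finset.range (r + 1),
          ((-1 : ℂ) ^ s * (Nat.choose r s : ℂ)) • (B (q - s) * A (p - ((r : ℚ) - s))))
    (n : ℤ) (q : ℚ) (i : ℕ) (hi : (r:ℤ) ≤ (n-1) + i) :
    (∑ᶠ k : ℕ, (cchoose (((n-1:ℤ):ℂ) + (i:ℂ)) k * (-1:ℂ)^k) •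
        (A ((k:ℚ) - ((n-1:ℤ):ℚ) - 1 - (j:ℚ)/(T:ℚ)) * B (q - (k:ℚ) + (j:ℚ)/(T:ℚ))))
      = ε • ∑ᶠ k : ℕ, (cchoose (((n-1:ℤ):ℂ) + (i:ℂ)) k * (-1:ℂ)^((n-1:ℤ) + (i:ℤ) - (k:ℤ))) •
        (B (q - ((n-1:ℤ):ℚ) - (i:ℚ) + (k:ℚ) + (j:ℚ)/(T:ℚ)) * A ((i:ℚ) - (k:ℚ) - 1 - (j:ℚ)/(T:ℚ))) := by
  set m : ℕ := ((n-1)+i).toNat with hmdef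
  have hm : (m:ℤ) = (n-1)+i := Int.toNat_of_nonneg (le_trans (Int.ofNat_nonneg r) hi)
  have hmr : r ≤ m := by omega
  have hmc : ((n-1:ℤ):ℂ) + (i:ℂ) = ((m:ℕ):ℂ) := by
    have h0 : ((m:ℤ):ℂ) = (((n-1)+i : ℤ):ℂ) := by rw [hm]
    push_cast at h0
    push_cast
    linear_combination -h0
  have hmq : ((m:ℕ):ℚ) = ((n-1:ℤ):ℚ) + (i:ℚ) := by
    have h0 : ((m:ℤ):ℚ) = (((n-1)+i : ℤ):ℚ) := by rw [hm]
    push_cast at h0 ⊢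
    linear_combination h0
  set Φ₁ : ℕ → Module.End ℂ M := fun k =>
    A ((k:ℚ) - ((n-1:ℤ):ℚ) - 1 - (j:ℚ)/(T:ℚ)) * B (q - (k:ℚ) + (j:ℚ)/(T:ℚ)) with hΦ₁
  set Φ₂ : ℕ → Module.End ℂ M := fun k =>
    B (q - (k:ℚ) + (j:ℚ)/(T:ℚ)) * A ((k:ℚ) - ((n-1:ℤ):ℚ) - 1 - (j:ℚ)/(T:ℚ)) with hΦ₂
  -- Step 1: LHS as finite sum
  have hL : (∑ᶠ k : ℕ, (cchoose (((n-1:ℤ):ℂ) + (i:ℂ)) k * (-1:ℂ)^k) • Φ₁ k)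
      = ∑ k ∈ Finset.range (m+1), ((m.choose k : ℂ) * (-1:ℂ)^k) • Φ₁ k := by
    rw [finsum_eq_sum_of_support_subset]
    · exact Finset.sum_congr rfl fun k _ => by rw [hmc, st15_cchoose_natCast]
    · intro k hk
      simp only [Function.mem_support] at hk
      simp only [Finset.coe_range, Set.mem_Iio]
      by_contra hcon
      apply hk
      rw [hmc, st15_cchoose_natCast, Nat.choose_eq_zero_of_lt (by omega)]
      simp
  -- Step 2: RHS as finite sum, reflected
  have hR : (∑ᶠ k : ℕ, (cchoose (((n-1:ℤ):ℂ) + (i:ℂ)) k * (-1:ℂ)^((n-1:ℤ) + (i:ℤ) - (k:ℤ))) •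
        (B (q - ((n-1:ℤ):ℚ) - (i:ℚ) + (k:ℚ) + (j:ℚ)/(T:ℚ)) * A ((i:ℚ) - (k:ℚ) - 1 - (j:ℚ)/(T:ℚ))))
      = ∑ k ∈ Finset.range (m+1), ((m.choose k : ℂ) * (-1:ℂ)^k) • Φ₂ k := by
    rw [finsum_eq_sum_of_support_subset (s := Finset.range (m+1))]
    · have hrefl := Finset.sum_range_reflect (fun k =>
        ((m.choose k : ℂ) * (-1:ℂ)^((n-1:ℤ) + (i:ℤ) - (k:ℤ))) •
          (B (q - ((n-1:ℤ):ℚ) - (i:ℚ) + (k:ℚ) + (j:ℚ)/(T:ℚ)) *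
            A ((i:ℚ) - (k:ℚ) - 1 - (j:ℚ)/(T:ℚ)))) (m+1)
      have h1 : ∑ k ∈ Finset.range (m+1),
          (cchoose (((n-1:ℤ):ℂ) + (i:ℂ)) k * (-1:ℂ)^((n-1:ℤ) + (i:ℤ) - (k:ℤ))) •
            (B (q - ((n-1:ℤ):ℚ) - (i:ℚ) + (k:ℚ) + (j:ℚ)/(T:ℚ)) * A ((i:ℚ) - (k:ℚ) - 1 - (j:ℚ)/(T:ℚ)))
          = ∑ k ∈ Finset.range (m+1),
          ((m.choose k : ℂ) * (-1:ℂ)^((n-1:ℤ) + (i:ℤ) - (k:ℤ))) •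
            (B (q - ((n-1:ℤ):ℚ) - (i:ℚ) + (k:ℚ) + (j:ℚ)/(T:ℚ)) * A ((i:ℚ) - (k:ℚ) - 1 - (j:ℚ)/(T:ℚ))) :=
        Finset.sum_congr rfl fun k _ => by rw [hmc, st15_cchoose_natCast]
      rw [h1, ← hrefl]
      refine Finset.sum_congr rfl fun k hk => ?_
      have hkm : k ≤ m := by
        simp only [Finset.mem_range] at hk; omega
      have e0 : m + 1 - 1 - k = m - k := by omega
      rw [e0]
      have e1 : (m.choose (m - k) : ℂ) = (m.choose k : ℂ) := by
        rw [Nat.choose_symm hkm]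
      have e2 : (-1:ℂ)^((n-1:ℤ) + (i:ℤ) - ((m - k : ℕ):ℤ)) = (-1:ℂ)^k := by
        have : (n-1:ℤ) + (i:ℤ) - ((m - k : ℕ):ℤ) = (k:ℤ) := by
          rw [Int.ofNat_sub hkm]; omega
        rw [this, zpow_natCast]
      have e3 : q - ((n-1:ℤ):ℚ) - (i:ℚ) + ((m - k : ℕ):ℚ) + (j:ℚ)/(T:ℚ) = q - (k:ℚ) + (j:ℚ)/(T:ℚ) := by
        rw [Nat.cast_sub hkm, hmq]; ring
      have e4 : (i:ℚ) - ((m - k : ℕ):ℚ) - 1 - (j:ℚ)/(T:ℚ)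
          = (k:ℚ) - ((n-1:ℤ):ℚ) - 1 - (j:ℚ)/(T:ℚ) := by
        rw [Nat.cast_sub hkm, hmq]; ring
      rw [e1, e2, e3, e4]
    · intro k hk
      simp only [Function.mem_support] at hk
      simp only [Finset.coe_range, Set.mem_Iio]
      by_contra hcon
      apply hk
      rw [hmc, st15_cchoose_natCast, Nat.choose_eq_zero_of_lt (by omega)]
      simp
  rw [hL, hR]
  -- Step 3: Vandermonde + locality
  have hv1 := st15_VAND (m - r) r Φ₁
  have hv2 := st15_VAND (m - r) r Φ₂
  rw [Nat.sub_add_cancel hmr] at hv1 hv2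
  rw [hv1, hv2]
  rw [Finset.smul_sum]
  refine Finset.sum_congr rfl fun t _ => ?_
  rw [smul_comm]
  congr 1
  -- inner: locality instance
  have hl := hloc ((t:ℚ) + (r:ℚ) - ((n-1:ℤ):ℚ) - 1 - (j:ℚ)/(T:ℚ)) (q - (t:ℚ) + (j:ℚ)/(T:ℚ))
  have g1 : ∑ s ∈ Finset.range (r+1), ((r.choose s : ℂ) * (-1)^s) • Φ₁ (t+s)
      = ∑ s ∈ Finset.range (r + 1),
          ((-1 : ℂ) ^ s * (Nat.choose r s : ℂ)) •
            (A (((t:ℚ) + (r:ℚ) - ((n-1:ℤ):ℚ) - 1 - (j:ℚ)/(T:ℚ)) - ((r : ℚ) - s)) *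
              B ((q - (t:ℚ) + (j:ℚ)/(T:ℚ)) - s)) := by
    refine Finset.sum_congr rfl fun s _ => ?_
    have ea : ((t+s:ℕ):ℚ) - ((n-1:ℤ):ℚ) - 1 - (j:ℚ)/(T:ℚ)
        = ((t:ℚ) + (r:ℚ) - ((n-1:ℤ):ℚ) - 1 - (j:ℚ)/(T:ℚ)) - ((r:ℚ) - (s:ℚ)) := by push_cast; ring
    have eb : q - ((t+s:ℕ):ℚ) + (j:ℚ)/(T:ℚ) = (q - (t:ℚ) + (j:ℚ)/(T:ℚ)) - (s:ℚ) := by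
      push_cast; ring
    simp only [hΦ₁]
    rw [ea, eb, mul_comm ((r.choose s:ℂ)) ((-1:ℂ)^s)]
  have g2 : ∑ s ∈ Finset.range (r+1), ((r.choose s : ℂ) * (-1)^s) • Φ₂ (t+s)
      = ∑ s ∈ Finset.range (r + 1),
          ((-1 : ℂ) ^ s * (Nat.choose r s : ℂ)) •
            (B ((q - (t:ℚ) + (j:ℚ)/(T:ℚ)) - s) *
              A (((t:ℚ) + (r:ℚ) - ((n-1:ℤ):ℚ) - 1 - (j:ℚ)/(T:ℚ)) - ((r : ℚ) - s))) := by
    refine Finset.sum_congr rfl fun s _ => ?_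
    have ea : ((t+s:ℕ):ℚ) - ((n-1:ℤ):ℚ) - 1 - (j:ℚ)/(T:ℚ)
        = ((t:ℚ) + (r:ℚ) - ((n-1:ℤ):ℚ) - 1 - (j:ℚ)/(T:ℚ)) - ((r:ℚ) - (s:ℚ)) := by push_cast; ring
    have eb : q - ((t+s:ℕ):ℚ) + (j:ℚ)/(T:ℚ) = (q - (t:ℚ) + (j:ℚ)/(T:ℚ)) - (s:ℚ) := by
      push_cast; ring
    simp only [hΦ₂]
    rw [ea, eb, mul_comm ((r.choose s:ℂ)) ((-1:ℂ)^s)]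
  rw [g1, g2, hl]

end st15aux

/-- Lemma 3.11: the derivative property of the twisted products.
For mutually local `ℤ_T`-twisted vertex operators `a(z) ∈ A^j` and `b(z) ∈ A` in
a local system on `M`, `(∂/∂z₀) Y_A(a(z),z₀) b(z) = Y_A(a'(z),z₀) b(z)`, i.e.
for every integer `n`, `a'(z)ₙ b(z) = -n · a(z)_{n-1} b(z)`, where the
coefficient of `z^q` in `a'(z)` is `(q+1) • A(q+1)`. -/
theorem stmt15 (M : Type*) [AddCommGroup M] [Module ℂ M]
    (T : ℕ) (hT : 0 < T) (j : ℤ) (A B : ℚ → Module.End ℂ M) (ε : ℂ)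
    (hε : ε = 1 ∨ ε = -1)
    (hAsupp : ∀ q : ℚ, A q ≠ 0 → ∃ m : ℤ, q + (j : ℚ) / (T : ℚ) = (m : ℚ))
    (hAtr : ∀ u : M, ∃ N : ℚ, ∀ q < N, A q u = 0)
    (hBtr : ∀ u : M, ∃ N : ℚ, ∀ q < N, B q u = 0)
    (hloc : ∃ r : ℕ, ∀ p q : ℚ,
      ∑ i ∈ Finset.range (r + 1),
          ((-1 : ℂ) ^ i * (Nat.choose r i : ℂ)) • (A (p - ((r : ℚ) - i)) * B (q - i))
        = ε • ∑ i ∈ Finset.range (r + 1),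
          ((-1 : ℂ) ^ i * (Nat.choose r i : ℂ)) • (B (q - i) * A (p - ((r : ℚ) - i)))) :
    ∀ (n : ℤ) (q : ℚ),
      twProd M T j (fun p => ((p : ℂ) + 1) • A (p + 1)) B ε n q
        = (-(n : ℂ)) • twProd M T j A B ε (n - 1) q := by
  obtain ⟨r, hloc⟩ := hloc
  intro n q
  set F : ℕ → Module.End ℂ M := fun i =>
    (cchoose ((j:ℂ)/(T:ℂ)) i * (-1:ℂ)^i) •
      ((∑ᶠ k : ℕ, (cchoose (((n-1:ℤ):ℂ) + (i:ℂ)) k * (-1:ℂ)^k) •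
          (A ((k:ℚ) - ((n-1:ℤ):ℚ) - 1 - (j:ℚ)/(T:ℚ)) * B (q - (k:ℚ) + (j:ℚ)/(T:ℚ))))
        - ε • (∑ᶠ k : ℕ, (cchoose (((n-1:ℤ):ℂ) + (i:ℂ)) k * (-1:ℂ)^((n-1:ℤ) + (i:ℤ) - (k:ℤ))) •
          (B (q - ((n-1:ℤ):ℚ) - (i:ℚ) + (k:ℚ) + (j:ℚ)/(T:ℚ)) *
            A ((i:ℚ) - (k:ℚ) - 1 - (j:ℚ)/(T:ℚ))))) with hF
  set G : ℕ → Module.End ℂ M := fun i =>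
    (cchoose ((j:ℂ)/(T:ℂ)) i * (-1:ℂ)^i) •
      ((∑ᶠ k : ℕ, (cchoose ((n:ℂ) + (i:ℂ)) k * (-1:ℂ)^k) •
          (((((k:ℚ) - (n:ℚ) - 1 - (j:ℚ)/(T:ℚ) : ℚ):ℂ) + 1) •
              A ((k:ℚ) - (n:ℚ) - 1 - (j:ℚ)/(T:ℚ) + 1) * B (q - (k:ℚ) + (j:ℚ)/(T:ℚ))))
        - ε • (∑ᶠ k : ℕ, (cchoose ((n:ℂ) + (i:ℂ)) k * (-1:ℂ)^((n:ℤ) + (i:ℤ) - (k:ℤ))) •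
          (B (q - (n:ℚ) - (i:ℚ) + (k:ℚ) + (j:ℚ)/(T:ℚ)) *
            ((((i:ℚ) - (k:ℚ) - 1 - (j:ℚ)/(T:ℚ) : ℚ):ℂ) + 1) •
              A ((i:ℚ) - (k:ℚ) - 1 - (j:ℚ)/(T:ℚ) + 1)))) with hG
  have hRHS : twProd M T j A B ε (n-1) q = ∑ᶠ i, F i := by
    simp only [twProd, hF]
  have hLHS : twProd M T j (fun p => ((p : ℂ) + 1) • A (p + 1)) B ε n q = ∑ᶠ i, G i := by
    simp only [twProd, hG]
  have hkey : ∀ i : ℕ, G i = (-(n:ℂ) - (i:ℂ)) • F i + ((i:ℂ) + 1) • F (i+1) := by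
    intro i
    simp only [hG, hF]
    set γ : ℂ := cchoose ((j:ℂ)/(T:ℂ)) i * (-1:ℂ)^i with hγ
    set δ : ℂ := cchoose ((j:ℂ)/(T:ℂ)) (i+1) * (-1:ℂ)^(i+1) with hδdef
    have hδ : ((i:ℂ)+1) * δ = ((i:ℂ) - (j:ℂ)/(T:ℂ)) * γ := by
      rw [hγ, hδdef]
      calc ((i:ℂ)+1) * (cchoose ((j:ℂ)/(T:ℂ)) (i+1) * (-1:ℂ)^(i+1))
          = (((i:ℂ)+1) * cchoose ((j:ℂ)/(T:ℂ)) (i+1)) * (-1:ℂ)^(i+1) := by ring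
        _ = (((j:ℂ)/(T:ℂ) - i) * cchoose ((j:ℂ)/(T:ℂ)) i) * (-1:ℂ)^(i+1) := by
              rw [st15_cchoose_succ]
        _ = ((i:ℂ) - (j:ℂ)/(T:ℂ)) * (cchoose ((j:ℂ)/(T:ℂ)) i * (-1:ℂ)^i) := by
              rw [pow_succ]; ring
    have c1 : ((n + (i:ℤ) : ℤ) : ℂ) = (n:ℂ) + (i:ℂ) := by push_cast; ring
    have eA := st15_keyA (E := Module.End ℂ M)
        (fun k : ℕ => A ((k:ℚ) - (n:ℚ) - (j:ℚ)/(T:ℚ)) * B (q - (k:ℚ) + (j:ℚ)/(T:ℚ)))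
        (n + (i:ℤ)) i ((j:ℂ)/(T:ℂ)) γ δ hδ
    have eB := st15_keyB (E := Module.End ℂ M)
        (fun k : ℕ => B (q - (n:ℚ) - (i:ℚ) + (k:ℚ) + (j:ℚ)/(T:ℚ)) *
          A ((i:ℚ) - (k:ℚ) - (j:ℚ)/(T:ℚ)))
        (n + (i:ℤ)) i ((j:ℂ)/(T:ℂ)) γ δ hδ
    rw [c1] at eA eB
    have harg : ((n-1:ℤ):ℂ) + (i:ℂ) = (n:ℂ) + (i:ℂ) - 1 := by push_cast; ring
    have harg2 : ((n-1:ℤ):ℂ) + ((i+1:ℕ):ℂ) = (n:ℂ) + (i:ℂ) := by push_cast; ring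
    have haq : ∀ k : ℕ, (k:ℚ) - ((n-1:ℤ):ℚ) - 1 - (j:ℚ)/(T:ℚ)
        = (k:ℚ) - (n:ℚ) - (j:ℚ)/(T:ℚ) := by intro k; push_cast; ring
    -- first sums
    have m1 : γ • (∑ᶠ k : ℕ, (cchoose ((n:ℂ) + (i:ℂ)) k * (-1:ℂ)^k) •
          (((((k:ℚ) - (n:ℚ) - 1 - (j:ℚ)/(T:ℚ) : ℚ):ℂ) + 1) •
              A ((k:ℚ) - (n:ℚ) - 1 - (j:ℚ)/(T:ℚ) + 1) * B (q - (k:ℚ) + (j:ℚ)/(T:ℚ))))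
        = ∑ᶠ k : ℕ, (γ * (cchoose ((n:ℂ) + (i:ℂ)) k * (-1:ℂ)^k) *
            ((k:ℂ) - ((n:ℂ) + (i:ℂ) - (i:ℂ)) - (j:ℂ)/(T:ℂ))) •
            (A ((k:ℚ) - (n:ℚ) - (j:ℚ)/(T:ℚ)) * B (q - (k:ℚ) + (j:ℚ)/(T:ℚ))) := by
      rw [smul_finsum]
      refine finsum_congr fun k => ?_
      rw [smul_mul_assoc, smul_smul, smul_smul]
      have hop : A ((k:ℚ) - (n:ℚ) - 1 - (j:ℚ)/(T:ℚ) + 1) = A ((k:ℚ) - (n:ℚ) - (j:ℚ)/(T:ℚ)) := by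
        congr 1; ring
      rw [hop]
      congr 1
      push_cast
      ring
    have m2 : (∑ᶠ k : ℕ, (γ * (cchoose ((n:ℂ) + (i:ℂ) - 1) k * (-1:ℂ)^k)) •
          (A ((k:ℚ) - (n:ℚ) - (j:ℚ)/(T:ℚ)) * B (q - (k:ℚ) + (j:ℚ)/(T:ℚ))))
        = γ • (∑ᶠ k : ℕ, (cchoose (((n-1:ℤ):ℂ) + (i:ℂ)) k * (-1:ℂ)^k) •
          (A ((k:ℚ) - ((n-1:ℤ):ℚ) - 1 - (j:ℚ)/(T:ℚ)) * B (q - (k:ℚ) + (j:ℚ)/(T:ℚ)))) := by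
      rw [smul_finsum]
      refine finsum_congr fun k => ?_
      rw [smul_smul, harg, haq k]
    have m3 : (∑ᶠ k : ℕ, (δ * (cchoose ((n:ℂ) + (i:ℂ)) k * (-1:ℂ)^k)) •
          (A ((k:ℚ) - (n:ℚ) - (j:ℚ)/(T:ℚ)) * B (q - (k:ℚ) + (j:ℚ)/(T:ℚ))))
        = δ • (∑ᶠ k : ℕ, (cchoose (((n-1:ℤ):ℂ) + ((i+1:ℕ):ℂ)) k * (-1:ℂ)^k) •
          (A ((k:ℚ) - ((n-1:ℤ):ℚ) - 1 - (j:ℚ)/(T:ℚ)) * B (q - (k:ℚ) + (j:ℚ)/(T:ℚ)))) := by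
      rw [smul_finsum]
      refine finsum_congr fun k => ?_
      rw [smul_smul, harg2, haq k]
    have t1 : γ • (∑ᶠ k : ℕ, (cchoose ((n:ℂ) + (i:ℂ)) k * (-1:ℂ)^k) •
          (((((k:ℚ) - (n:ℚ) - 1 - (j:ℚ)/(T:ℚ) : ℚ):ℂ) + 1) •
              A ((k:ℚ) - (n:ℚ) - 1 - (j:ℚ)/(T:ℚ) + 1) * B (q - (k:ℚ) + (j:ℚ)/(T:ℚ))))
        = (-((n:ℂ) + (i:ℂ))) • (γ • (∑ᶠ k : ℕ, (cchoose (((n-1:ℤ):ℂ) + (i:ℂ)) k * (-1:ℂ)^k) •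
            (A ((k:ℚ) - ((n-1:ℤ):ℚ) - 1 - (j:ℚ)/(T:ℚ)) * B (q - (k:ℚ) + (j:ℚ)/(T:ℚ)))))
          + ((i:ℂ)+1) • (δ • (∑ᶠ k : ℕ, (cchoose (((n-1:ℤ):ℂ) + ((i+1:ℕ):ℂ)) k * (-1:ℂ)^k) •
            (A ((k:ℚ) - ((n-1:ℤ):ℚ) - 1 - (j:ℚ)/(T:ℚ)) * B (q - (k:ℚ) + (j:ℚ)/(T:ℚ))))) := by
      rw [m1, eA, m2, m3]
    -- second sums
    have hexp : ∀ k : ℕ, (n + (i:ℤ) - 1 - (k:ℤ)) = ((n-1:ℤ) + (i:ℤ) - (k:ℤ)) := by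
      intro k; ring
    have hexp2 : ∀ k : ℕ, ((n-1:ℤ) + ((i+1:ℕ):ℤ) - (k:ℤ)) = (n + (i:ℤ) - (k:ℤ)) := by
      intro k; push_cast; ring
    have hB1 : ∀ k : ℕ, q - (n:ℚ) - (i:ℚ) + ((k+1:ℕ):ℚ) + (j:ℚ)/(T:ℚ)
        = q - ((n-1:ℤ):ℚ) - (i:ℚ) + (k:ℚ) + (j:ℚ)/(T:ℚ) := by intro k; push_cast; ring
    have hA1 : ∀ k : ℕ, (i:ℚ) - ((k+1:ℕ):ℚ) - (j:ℚ)/(T:ℚ)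
        = (i:ℚ) - (k:ℚ) - 1 - (j:ℚ)/(T:ℚ) := by intro k; push_cast; ring
    have hB2 : ∀ k : ℕ, q - ((n-1:ℤ):ℚ) - ((i+1:ℕ):ℚ) + (k:ℚ) + (j:ℚ)/(T:ℚ)
        = q - (n:ℚ) - (i:ℚ) + (k:ℚ) + (j:ℚ)/(T:ℚ) := by intro k; push_cast; ring
    have hA2 : ∀ k : ℕ, ((i+1:ℕ):ℚ) - (k:ℚ) - 1 - (j:ℚ)/(T:ℚ)
        = (i:ℚ) - (k:ℚ) - (j:ℚ)/(T:ℚ) := by intro k; push_cast; ring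
    have m4 : γ • (∑ᶠ k : ℕ, (cchoose ((n:ℂ) + (i:ℂ)) k * (-1:ℂ)^((n:ℤ) + (i:ℤ) - (k:ℤ))) •
          (B (q - (n:ℚ) - (i:ℚ) + (k:ℚ) + (j:ℚ)/(T:ℚ)) *
            ((((i:ℚ) - (k:ℚ) - 1 - (j:ℚ)/(T:ℚ) : ℚ):ℂ) + 1) •
              A ((i:ℚ) - (k:ℚ) - 1 - (j:ℚ)/(T:ℚ) + 1)))
        = ∑ᶠ k : ℕ, (γ * (cchoose ((n:ℂ) + (i:ℂ)) k * (-1:ℂ)^(n + (i:ℤ) - (k:ℤ))) *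
            ((i:ℂ) - (k:ℂ) - (j:ℂ)/(T:ℂ))) •
            (B (q - (n:ℚ) - (i:ℚ) + (k:ℚ) + (j:ℚ)/(T:ℚ)) *
              A ((i:ℚ) - (k:ℚ) - (j:ℚ)/(T:ℚ))) := by
      rw [smul_finsum]
      refine finsum_congr fun k => ?_
      rw [mul_smul_comm, smul_smul, smul_smul]
      have hop : A ((i:ℚ) - (k:ℚ) - 1 - (j:ℚ)/(T:ℚ) + 1) = A ((i:ℚ) - (k:ℚ) - (j:ℚ)/(T:ℚ)) := by
        congr 1; ring
      rw [hop]
      congr 1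
      push_cast
      ring
    have m5 : (∑ᶠ k : ℕ, (γ * (cchoose ((n:ℂ) + (i:ℂ) - 1) k * (-1:ℂ)^(n + (i:ℤ) - 1 - (k:ℤ)))) •
          (B (q - (n:ℚ) - (i:ℚ) + ((k+1:ℕ):ℚ) + (j:ℚ)/(T:ℚ)) *
            A ((i:ℚ) - ((k+1:ℕ):ℚ) - (j:ℚ)/(T:ℚ))))
        = γ • (∑ᶠ k : ℕ, (cchoose (((n-1:ℤ):ℂ) + (i:ℂ)) k * (-1:ℂ)^((n-1:ℤ) + (i:ℤ) - (k:ℤ))) •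
          (B (q - ((n-1:ℤ):ℚ) - (i:ℚ) + (k:ℚ) + (j:ℚ)/(T:ℚ)) *
            A ((i:ℚ) - (k:ℚ) - 1 - (j:ℚ)/(T:ℚ)))) := by
      rw [smul_finsum]
      refine finsum_congr fun k => ?_
      rw [smul_smul, harg, hexp k, hB1 k, hA1 k]
    have m6 : (∑ᶠ k : ℕ, (δ * (cchoose ((n:ℂ) + (i:ℂ)) k * (-1:ℂ)^(n + (i:ℤ) - (k:ℤ)))) •
          (B (q - (n:ℚ) - (i:ℚ) + (k:ℚ) + (j:ℚ)/(T:ℚ)) * A ((i:ℚ) - (k:ℚ) - (j:ℚ)/(T:ℚ))))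
        = δ • (∑ᶠ k : ℕ, (cchoose (((n-1:ℤ):ℂ) + ((i+1:ℕ):ℂ)) k *
            (-1:ℂ)^((n-1:ℤ) + ((i+1:ℕ):ℤ) - (k:ℤ))) •
          (B (q - ((n-1:ℤ):ℚ) - ((i+1:ℕ):ℚ) + (k:ℚ) + (j:ℚ)/(T:ℚ)) *
            A (((i+1:ℕ):ℚ) - (k:ℚ) - 1 - (j:ℚ)/(T:ℚ)))) := by
      rw [smul_finsum]
      refine finsum_congr fun k => ?_
      rw [smul_smul, harg2, hexp2 k, hB2 k, hA2 k]
    have t2 : γ • (∑ᶠ k : ℕ, (cchoose ((n:ℂ) + (i:ℂ)) k * (-1:ℂ)^((n:ℤ) + (i:ℤ) - (k:ℤ))) •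
          (B (q - (n:ℚ) - (i:ℚ) + (k:ℚ) + (j:ℚ)/(T:ℚ)) *
            ((((i:ℚ) - (k:ℚ) - 1 - (j:ℚ)/(T:ℚ) : ℚ):ℂ) + 1) •
              A ((i:ℚ) - (k:ℚ) - 1 - (j:ℚ)/(T:ℚ) + 1)))
        = (-((n:ℂ) + (i:ℂ))) • (γ • (∑ᶠ k : ℕ,
              (cchoose (((n-1:ℤ):ℂ) + (i:ℂ)) k * (-1:ℂ)^((n-1:ℤ) + (i:ℤ) - (k:ℤ))) •
            (B (q - ((n-1:ℤ):ℚ) - (i:ℚ) + (k:ℚ) + (j:ℚ)/(T:ℚ)) *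
              A ((i:ℚ) - (k:ℚ) - 1 - (j:ℚ)/(T:ℚ)))))
          + ((i:ℂ)+1) • (δ • (∑ᶠ k : ℕ, (cchoose (((n-1:ℤ):ℂ) + ((i+1:ℕ):ℂ)) k *
              (-1:ℂ)^((n-1:ℤ) + ((i+1:ℕ):ℤ) - (k:ℤ))) •
            (B (q - ((n-1:ℤ):ℚ) - ((i+1:ℕ):ℚ) + (k:ℚ) + (j:ℚ)/(T:ℚ)) *
              A (((i+1:ℕ):ℚ) - (k:ℚ) - 1 - (j:ℚ)/(T:ℚ))))) := by
      rw [m4, eB, m5, m6]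
    rw [smul_sub, smul_comm γ ε, t1, t2]
    module
  rw [hLHS, hRHS]
  have hF0 : ∀ i : ℕ, ((r:ℤ) + 1 - n).toNat ≤ i → F i = 0 := by
    intro i hi
    have hge : (r:ℤ) ≤ (n-1) + i := by
      have h2 := Int.self_le_toNat ((r:ℤ) + 1 - n)
      omega
    simp only [hF]
    rw [st15_C1 T j A B ε r hloc n q i hge, sub_self, smul_zero]
  set N : ℕ := ((r:ℤ) + 1 - n).toNat with hN
  have hsubF : Function.support F ⊆ ↑(Finset.range (N+1)) := by
    intro i hi
    simp only [Function.mem_support] at hi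
    simp only [Finset.coe_range, Set.mem_Iio]
    by_contra hcon
    exact hi (hF0 i (by omega))
  have hsubG : Function.support G ⊆ ↑(Finset.range (N+1)) := by
    intro i hi
    simp only [Function.mem_support] at hi
    simp only [Finset.coe_range, Set.mem_Iio]
    by_contra hcon
    apply hi
    rw [hkey i, hF0 i (by omega), hF0 (i+1) (by omega), smul_zero, smul_zero, add_zero]
  rw [finsum_eq_sum_of_support_subset _ hsubG, finsum_eq_sum_of_support_subset _ hsubF]
  rw [Finset.sum_congr rfl (fun i _ => hkey i)]
  have e1 : ∑ i ∈ Finset.range (N+1), ((-(n:ℂ) - (i:ℂ)) • F i + ((i:ℂ) + 1) • F (i+1))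
      = (∑ i ∈ Finset.range (N+1), (-(n:ℂ)) • F i)
        + ∑ i ∈ Finset.range (N+1), (((i:ℂ)+1) • F (i+1) - (i:ℂ) • F i) := by
    rw [← Finset.sum_add_distrib]
    refine Finset.sum_congr rfl fun i _ => ?_
    module
  rw [e1]
  have e2 : ∑ i ∈ Finset.range (N+1), (((i:ℂ)+1) • F (i+1) - (i:ℂ) • F i) = 0 := by
    have h3 : ∀ i ∈ Finset.range (N+1), ((i:ℂ)+1) • F (i+1) - (i:ℂ) • F i
        = (((i+1:ℕ):ℂ) • F (i+1)) - ((i:ℕ):ℂ) • F i := by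
      intro i _
      congr 2
      push_cast
      ring
    rw [Finset.sum_congr rfl h3, Finset.sum_range_sub (fun i => ((i:ℕ):ℂ) • F i) (N+1)]
    rw [hF0 (N+1) (by omega), smul_zero]
    simp
  rw [e2, add_zero, ← Finset.smul_sum]
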